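/- arXiv:1801.01359 — 4 statements merged into one kernel-verified Lean document; each statement's English description precedes it below -/
import Mathlib

section
/- (Proposition 2.1.) For every nonempty u ⊆ {1,…,p}, the total Sobol' index equals the squared relative L² error of the best approximation of f − f₀ by a function not depending on x_u: T_u = ‖(f − f₀) − (E[f | σ(x_{∼u})] − f₀)‖₂² / ‖f − f₀‖₂² = ‖f − E[f | σ(x_{∼u})]‖₂² / ‖f − f₀‖₂². -/
open MeasureTheory ProbabilityTheory

/-- The sub-σ-algebra generated by the coordinates in `v`. -/
def coordSigma {p : ℕ} (Ω : Fin p → Type*) [∀ i, MeasurableSpace (Ω i)]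
    (v : Finset (Fin p)) : MeasurableSpace (∀ i, Ω i) :=
  ⨆ i ∈ v, MeasurableSpace.comap (fun x : ∀ j, Ω j => x i) inferInstance

/-- The recursively defined (generalized ANOVA) components `f_v`. -/
noncomputable def anovaComp {p : ℕ} {Ω : Fin p → Type*} [∀ i, MeasurableSpace (Ω i)]
    (μ : Measure (∀ i, Ω i)) (f : (∀ i, Ω i) → ℝ) : Finset (Fin p) → (∀ i, Ω i) → ℝ
  | v =>
    if v = ∅ then fun _ => ∫ x, f x ∂μ
    else μ[f | coordSigma Ω v] - ∑ w ∈ v.ssubsets.attach, anovaComp μ f w.1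
  termination_by v => v.card
  decreasing_by exact Finset.card_lt_card (Finset.mem_ssubsets.mp w.2)

/-- Variance (`‖f - f₀‖₂²`). -/
noncomputable def fVar {α : Type*} [MeasurableSpace α] (μ : Measure α) (f : α → ℝ) : ℝ :=
  ∫ x, (f x - ∫ y, f y ∂μ) ^ 2 ∂μ

/-- Covariance. -/
noncomputable def fCov {α : Type*} [MeasurableSpace α] (μ : Measure α) (g f : α → ℝ) : ℝ :=
  ∫ x, (g x - ∫ y, g y ∂μ) * (f x - ∫ y, f y ∂μ) ∂μ

/-- Sobol' index `S_v`. -/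
noncomputable def sobolIndex {p : ℕ} {Ω : Fin p → Type*} [∀ i, MeasurableSpace (Ω i)]
    (μ : Measure (∀ i, Ω i)) (f : (∀ i, Ω i) → ℝ) (v : Finset (Fin p)) : ℝ :=
  fCov μ (anovaComp μ f v) f / fVar μ f

/-- Total Sobol' index `T_u`. -/
noncomputable def totalSobolIndex {p : ℕ} {Ω : Fin p → Type*} [∀ i, MeasurableSpace (Ω i)]
    (μ : Measure (∀ i, Ω i)) (f : (∀ i, Ω i) → ℝ) (u : Finset (Fin p)) : ℝ :=
  ∑ v ∈ Finset.univ.powerset.filter (fun v => (v ∩ u).Nonempty), sobolIndex μ f v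

/-!
Grouping the components by whether they meet `u`, the components with `v ⊆ ∼u` telescope to
`E[f | σ(x_{∼u})]` and all components telescope to `f`, so `T_u · Var f = Cov(f, f) - Cov(g, f)`
with `g = E[f | σ(x_{∼u})]`. Since `f - g` is orthogonal in `L²` to every `σ(x_{∼u})`-measurable
function, in particular to `g - E[f]`, this difference is `‖f - g‖₂²`.
-/

section Covariance

variable {α : Type*} {m m0 : MeasurableSpace α} {μ : Measure α} {f g h : α → ℝ}

lemma fCov_congr_ae_left {g' : α → ℝ} (hg : g =ᵐ[μ] g') : fCov μ g f = fCov μ g' f := by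
  simp only [fCov, integral_congr_ae hg]
  exact integral_congr_ae (hg.mono fun x hx => by simp only [hx])

lemma integral_sub_condExp_mul_eq_zero [IsFiniteMeasure μ] (hm : m ≤ m0) (hf : MemLp f 2 μ)
    (hh_meas : StronglyMeasurable[m] h) (hh : MemLp h 2 μ) :
    ∫ x, (f x - (μ[f | m]) x) * h x ∂μ = 0 := by
  have hfh : Integrable (fun x => f x * h x) μ := hf.integrable_mul hh
  have hgh : Integrable (fun x => (μ[f | m]) x * h x) μ := (hf.condExp one_le_two).integrable_mul hh
  have hpull : μ[f * h | m] =ᵐ[μ] μ[f | m] * h :=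
    condExp_mul_of_stronglyMeasurable_right hh_meas hfh (hf.integrable one_le_two)
  simp only [sub_mul]
  rw [integral_sub hfh hgh, sub_eq_zero, ← integral_condExp hm]
  exact integral_congr_ae hpull

variable [IsProbabilityMeasure μ]

lemma fCov_eq_integral_mul_sub (hg : MemLp g 2 μ) (hf : MemLp f 2 μ) :
    fCov μ g f = ∫ x, g x * (f x - ∫ y, f y ∂μ) ∂μ := by
  have hf_centered : Integrable (fun x => f x - ∫ y, f y ∂μ) μ :=
    (hf.integrable one_le_two).sub (integrable_const _)
  have hf_centered_mean : ∫ x, (f x - ∫ y, f y ∂μ) ∂μ = 0 := by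
    rw [integral_sub (hf.integrable one_le_two) (integrable_const _)]
    simp
  have hgf : Integrable (fun x => g x * (f x - ∫ y, f y ∂μ)) μ :=
    hg.integrable_mul (hf.sub (memLp_const _))
  simp only [fCov, sub_mul]
  rw [integral_sub hgf (hf_centered.const_mul _), integral_const_mul, hf_centered_mean, mul_zero,
    sub_zero]

lemma fCov_finset_sum_left {ι : Type*} (s : Finset ι) {g : ι → α → ℝ}
    (hg : ∀ i ∈ s, MemLp (g i) 2 μ) (hf : MemLp f 2 μ) :
    fCov μ (∑ i ∈ s, g i) f = ∑ i ∈ s, fCov μ (g i) f := by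
  rw [fCov_eq_integral_mul_sub (memLp_finsetSum' s hg) hf,
    Finset.sum_congr rfl fun i hi => fCov_eq_integral_mul_sub (hg i hi) hf, ← integral_finsetSum s]
  · simp only [Finset.sum_apply, Finset.sum_mul]
  · exact fun i hi => (hg i hi).integrable_mul (hf.sub (memLp_const _))

lemma fCov_sub_fCov_condExp (hm : m ≤ m0) (hf : MemLp f 2 μ) :
    fCov μ f f - fCov μ (μ[f | m]) f = ∫ x, (f x - (μ[f | m]) x) ^ 2 ∂μ := by
  set g := μ[f | m]
  set a := ∫ y, f y ∂μ
  have hg : MemLp g 2 μ := hf.condExp one_le_two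
  have hf_sub_g : MemLp (fun x => f x - g x) 2 μ := hf.sub hg
  have hff : Integrable (fun x => f x * (f x - a)) μ := hf.integrable_mul (hf.sub (memLp_const a))
  have hgf : Integrable (fun x => g x * (f x - a)) μ := hg.integrable_mul (hf.sub (memLp_const a))
  have hcross : Integrable (fun x => (f x - g x) * (g x - a)) μ :=
    hf_sub_g.integrable_mul (hg.sub (memLp_const a))
  have horth : ∫ x, (f x - g x) * (g x - a) ∂μ = 0 :=
    integral_sub_condExp_mul_eq_zero hm hf
      (stronglyMeasurable_condExp.sub stronglyMeasurable_const) (hg.sub (memLp_const a))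
  calc fCov μ f f - fCov μ g f = ∫ x, (f x * (f x - a) - g x * (f x - a)) ∂μ := by
        rw [fCov_eq_integral_mul_sub hf hf, fCov_eq_integral_mul_sub hg hf, integral_sub hff hgf]
    _ = ∫ x, ((f x - g x) ^ 2 + (f x - g x) * (g x - a)) ∂μ := by
        congr 1; funext x; ring
    _ = ∫ x, (f x - g x) ^ 2 ∂μ := by
        rw [integral_add hf_sub_g.integrable_sq hcross, horth, add_zero]

end Covariance

section ANOVA

variable {p : ℕ} {Ω : Fin p → Type*} [∀ i, MeasurableSpace (Ω i)]

lemma coordSigma_le (v : Finset (Fin p)) : coordSigma Ω v ≤ MeasurableSpace.pi :=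
  iSup₂_le fun i _ => (measurable_pi_apply i).comap_le

lemma coordSigma_empty : coordSigma Ω (∅ : Finset (Fin p)) = ⊥ := by
  simp [coordSigma]

lemma coordSigma_univ : coordSigma Ω (Finset.univ : Finset (Fin p)) = MeasurableSpace.pi := by
  simp [coordSigma, MeasurableSpace.pi]

variable (μ : Measure (∀ i, Ω i)) {f : (∀ i, Ω i) → ℝ}

lemma memLp_anovaComp [IsFiniteMeasure μ] (hf : MemLp f 2 μ) (v : Finset (Fin p)) :
    MemLp (anovaComp μ f v) 2 μ := by
  induction v using Finset.strongInduction with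
  | _ v ih =>
    rw [anovaComp]
    split_ifs
    · exact memLp_const _
    · exact (hf.condExp one_le_two).sub
        (memLp_finsetSum' _ fun w _ => ih w.1 (Finset.mem_ssubsets.mp w.2))

variable [IsProbabilityMeasure μ]

lemma sum_powerset_anovaComp (v : Finset (Fin p)) :
    ∑ w ∈ v.powerset, anovaComp μ f w = μ[f | coordSigma Ω v] := by
  by_cases hv : v = ∅
  · subst hv
    rw [coordSigma_empty, condExp_bot, Finset.powerset_empty, Finset.sum_singleton, anovaComp,
      if_pos rfl]
  · rw [← Finset.insert_erase (Finset.mem_powerset_self v), ← Finset.ssubsets,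
      Finset.sum_insert fun h => (Finset.mem_ssubsets.mp h).ne rfl, anovaComp, if_neg hv,
      Finset.sum_attach v.ssubsets (anovaComp μ f), sub_add_cancel]

lemma sum_powerset_fCov_anovaComp (hf : MemLp f 2 μ) (v : Finset (Fin p)) :
    ∑ w ∈ v.powerset, fCov μ (anovaComp μ f w) f = fCov μ (μ[f | coordSigma Ω v]) f := by
  rw [← fCov_finset_sum_left _ (fun w _ => memLp_anovaComp μ hf w) hf, sum_powerset_anovaComp]

lemma fCov_condExp_coordSigma_univ (hf : MemLp f 2 μ) :
    fCov μ (μ[f | coordSigma Ω Finset.univ]) f = fCov μ f f := by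
  rw [coordSigma_univ]
  exact fCov_congr_ae_left (condExp_of_aestronglyMeasurable' le_rfl hf.1 (hf.integrable one_le_two))

end ANOVA

lemma filter_not_inter_nonempty_powerset_univ {α : Type*} [Fintype α] [DecidableEq α]
    (u : Finset α) : Finset.univ.powerset.filter (fun v => ¬(v ∩ u).Nonempty) = uᶜ.powerset := by
  ext v
  simp only [Finset.mem_filter, Finset.mem_powerset, Finset.subset_univ, true_and,
    Finset.not_nonempty_iff_eq_empty, Finset.subset_compl_iff_disjoint_right,
    Finset.disjoint_iff_inter_eq_empty]

lemma totalSobolIndex_eq_fCov_sub_fCov_condExp {p : ℕ} {Ω : Fin p → Type*}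
    [∀ i, MeasurableSpace (Ω i)] (μ : Measure (∀ i, Ω i)) [IsProbabilityMeasure μ]
    {f : (∀ i, Ω i) → ℝ} (hf : MemLp f 2 μ) (u : Finset (Fin p)) :
    totalSobolIndex μ f u = (fCov μ f f - fCov μ (μ[f | coordSigma Ω uᶜ]) f) / fVar μ f := by
  have hsplit := Finset.sum_filter_add_sum_filter_not Finset.univ.powerset
    (fun v => (v ∩ u).Nonempty) (fun v => fCov μ (anovaComp μ f v) f)
  rw [filter_not_inter_nonempty_powerset_univ,
    sum_powerset_fCov_anovaComp μ hf, sum_powerset_fCov_anovaComp μ hf,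
    fCov_condExp_coordSigma_univ μ hf] at hsplit
  rw [totalSobolIndex, ← eq_sub_of_add_eq hsplit, Finset.sum_div]
  rfl

theorem totalSobolIndex_eq_approximation_error_general
    {p : ℕ} (Ω : Fin p → Type*) [∀ i, MeasurableSpace (Ω i)]
    (μ : Measure (∀ i, Ω i)) [IsProbabilityMeasure μ]
    (f : (∀ i, Ω i) → ℝ) (hf : MemLp f 2 μ)
    (u : Finset (Fin p)) :
    totalSobolIndex μ f u =
      (∫ x, ((f x - ∫ y, f y ∂μ) - ((μ[f | coordSigma Ω uᶜ]) x - ∫ y, f y ∂μ)) ^ 2 ∂μ)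
        / fVar μ f ∧
    totalSobolIndex μ f u =
      (∫ x, (f x - (μ[f | coordSigma Ω uᶜ]) x) ^ 2 ∂μ) / fVar μ f := by
  have h := totalSobolIndex_eq_fCov_sub_fCov_condExp μ hf u
  rw [fCov_sub_fCov_condExp (coordSigma_le uᶜ) hf] at h
  simp only [sub_sub_sub_cancel_right]
  exact ⟨h, h⟩

/-- Proposition 2.1: the total Sobol' index equals the squared relative L² error of the
best approximation of `f - f₀` by a function not depending on `x_u`. -/
theorem totalSobolIndex_eq_approximation_error
    {p : ℕ} (hp : 1 ≤ p) (Ω : Fin p → Type*) [∀ i, MeasurableSpace (Ω i)]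
    (μ : Measure (∀ i, Ω i)) [IsProbabilityMeasure μ]
    (f : (∀ i, Ω i) → ℝ) (hf : MemLp f 2 μ)
    (hvar : 0 < fVar μ f)
    (u : Finset (Fin p)) (hu : u.Nonempty) :
    totalSobolIndex μ f u =
      (∫ x, ((f x - ∫ y, f y ∂μ) - ((μ[f | coordSigma Ω uᶜ]) x - ∫ y, f y ∂μ)) ^ 2 ∂μ)
        / fVar μ f ∧
    totalSobolIndex μ f u =
      (∫ x, (f x - (μ[f | coordSigma Ω uᶜ]) x) ^ 2 ∂μ) / fVar μ f :=
  totalSobolIndex_eq_approximation_error_general Ω μ f hf u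
end

section
/- (Proposition 3.2.) Let u ⊆ {1,…,p} be nonempty and g : Ω_{∼u} → Ω_u measurable with G(x) = (g(x_{∼u}), x_{∼u}) and f∘G ∈ L²(μ). Let r = f − (a fixed measurable version, depending only on x_{∼u}, of E[f | σ(x_{∼u})]), so that T_u = ‖r‖₂²/‖f − f₀‖₂², and assume ‖r‖₂ > 0. Then the relative error δ_u = ‖f − f∘G‖₂²/‖f − f₀‖₂² satisfies δ_u ≤ T_u + ‖r∘G‖₂²/‖f − f₀‖₂² + 2 T_u ‖r∘G‖₂/‖r‖₂. -/
open MeasureTheory ProbabilityTheory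

/-- The map `G(x) = (g(x_{∼u}), x_{∼u})`: the coordinates in `u` are replaced by
`g` applied to the remaining coordinates. -/
def replaceCoords {p : ℕ} {Ω : Fin p → Type*} (u : Finset (Fin p))
    (g : (∀ i : {i : Fin p // i ∈ uᶜ}, Ω i) → ∀ i : {i : Fin p // i ∈ u}, Ω i)
    (x : ∀ i, Ω i) : ∀ i, Ω i :=
  fun i => if h : i ∈ u then g (fun j => x j) ⟨i, h⟩ else x i

/-!
Since `h` depends only on `x_{∼u}` and `G` leaves those coordinates unchanged, `h ∘ G = h`, so
`f - f ∘ G = r - r ∘ G`. Minkowski's inequality in `L²` gives `‖f - f ∘ G‖₂ ≤ ‖r‖₂ + ‖r ∘ G‖₂`;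
squaring and dividing by `‖f - f₀‖₂²` is the claimed bound. Here `r ∈ L²` because conditional
expectation preserves `L²`.
-/

section L2

variable {α : Type*} [MeasurableSpace α] {μ : Measure α} {a b : α → ℝ}

lemma MeasureTheory.MemLp.sqrt_integral_sq_eq (ha : MemLp a 2 μ) :
    √(∫ x, a x ^ 2 ∂μ) = (eLpNorm a 2 μ).toReal := by
  rw [ha.eLpNorm_eq_integral_rpow_norm two_ne_zero ENNReal.ofNat_ne_top,
    ENNReal.toReal_ofReal (by positivity), Real.sqrt_eq_rpow]
  simp [Real.norm_eq_abs, sq_abs]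

lemma sqrt_integral_sq_sub_le (ha : MemLp a 2 μ) (hb : MemLp b 2 μ) :
    √(∫ x, (a x - b x) ^ 2 ∂μ) ≤ √(∫ x, a x ^ 2 ∂μ) + √(∫ x, b x ^ 2 ∂μ) := by
  have hab : MemLp (fun x => a x - b x) 2 μ := ha.sub hb
  rw [hab.sqrt_integral_sq_eq, ha.sqrt_integral_sq_eq, hb.sqrt_integral_sq_eq]
  exact ENNReal.toReal_le_add (eLpNorm_sub_le ha.1 hb.1 one_le_two) ha.eLpNorm_ne_top
    hb.eLpNorm_ne_top

lemma integral_sq_sub_le (ha : MemLp a 2 μ) (hb : MemLp b 2 μ) :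
    ∫ x, (a x - b x) ^ 2 ∂μ ≤ (√(∫ x, a x ^ 2 ∂μ) + √(∫ x, b x ^ 2 ∂μ)) ^ 2 := by
  rw [← Real.sq_sqrt (integral_nonneg fun x => sq_nonneg (a x - b x))]
  gcongr
  exact sqrt_integral_sq_sub_le ha hb

end L2

lemma add_sq_div_eq_of_ne_zero {s : ℝ} (hs : s ≠ 0) (t V : ℝ) :
    (s + t) ^ 2 / V = s ^ 2 / V + t ^ 2 / V + 2 * (s ^ 2 / V) * (t / s) := by
  have hst : s ^ 2 / V * (t / s) = s * t / V := by
    rw [div_mul_div_comm, sq, mul_assoc, mul_comm V, mul_div_mul_left _ _ hs]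
  rw [mul_assoc, hst]
  ring

lemma apply_eq_of_measurable_comap {α γ β : Type*} [mγ : MeasurableSpace γ]
    [MeasurableSpace β] [MeasurableSingletonClass β] {π : α → γ} {h : α → β}
    (hh : Measurable[mγ.comap π] h) {x y : α} (hxy : π x = π y) : h x = h y := by
  obtain ⟨t, -, ht⟩ := hh (measurableSet_singleton (h y))
  have hy : y ∈ h ⁻¹' {h y} := rfl
  show x ∈ h ⁻¹' {h y}
  rw [← ht] at hy ⊢
  rwa [Set.mem_preimage, hxy]

section Coordinates

variable {p : ℕ} {Ω : Fin p → Type*}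

lemma coordSigma_le_comap_restrict [∀ i, MeasurableSpace (Ω i)] (v : Finset (Fin p)) :
    coordSigma Ω v ≤ MeasurableSpace.comap v.restrict MeasurableSpace.pi := by
  refine iSup₂_le fun i hi => ?_
  have : (fun x : ∀ j, Ω j => x i) = (fun y : ∀ j : v, Ω j => y ⟨i, hi⟩) ∘ v.restrict := rfl
  rw [this, ← MeasurableSpace.comap_comp]
  exact MeasurableSpace.comap_mono (measurable_iff_comap_le.mp (measurable_pi_apply _))

lemma restrict_compl_replaceCoords (u : Finset (Fin p))
    (g : (∀ i : {i : Fin p // i ∈ uᶜ}, Ω i) → ∀ i : {i : Fin p // i ∈ u}, Ω i)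
    (x : ∀ i, Ω i) : uᶜ.restrict (replaceCoords u g x) = uᶜ.restrict x := by
  funext j
  exact dif_neg (Finset.mem_compl.mp j.2)

lemma apply_replaceCoords_of_measurable_coordSigma [∀ i, MeasurableSpace (Ω i)]
    {β : Type*} [MeasurableSpace β] [MeasurableSingletonClass β] {u : Finset (Fin p)}
    (g : (∀ i : {i : Fin p // i ∈ uᶜ}, Ω i) → ∀ i : {i : Fin p // i ∈ u}, Ω i)
    {h : (∀ i, Ω i) → β} (hh : Measurable[coordSigma Ω uᶜ] h) (x : ∀ i, Ω i) :
    h (replaceCoords u g x) = h x :=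
  apply_eq_of_measurable_comap (hh.mono (coordSigma_le_comap_restrict uᶜ) le_rfl)
    (restrict_compl_replaceCoords u g x)

end Coordinates

theorem delta_upper_bound_general
    {p : ℕ} (Ω : Fin p → Type*) [∀ i, MeasurableSpace (Ω i)]
    (μ : Measure (∀ i, Ω i)) [IsProbabilityMeasure μ]
    (f : (∀ i, Ω i) → ℝ) (hf : MemLp f 2 μ)
    (hvar : 0 < fVar μ f)
    (u : Finset (Fin p))
    (g : (∀ i : {i : Fin p // i ∈ uᶜ}, Ω i) → ∀ i : {i : Fin p // i ∈ u}, Ω i)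
    (hfG : MemLp (fun x => f (replaceCoords u g x)) 2 μ)
    -- `h` is a fixed measurable version of `E[f | σ(x_{∼u})]` depending only on `x_{∼u}`:
    (h : (∀ i, Ω i) → ℝ)
    (hmeas : Measurable[coordSigma Ω uᶜ] h)
    (hver : h =ᵐ[μ] μ[f | coordSigma Ω uᶜ])
    (hrpos : 0 < Real.sqrt (∫ x, (f x - h x) ^ 2 ∂μ)) :
    (∫ x, (f x - f (replaceCoords u g x)) ^ 2 ∂μ) / fVar μ f ≤
      (∫ x, (f x - h x) ^ 2 ∂μ) / fVar μ f
      + (∫ x, (f (replaceCoords u g x) - h (replaceCoords u g x)) ^ 2 ∂μ) / fVar μ f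
      + 2 * ((∫ x, (f x - h x) ^ 2 ∂μ) / fVar μ f)
          * (Real.sqrt (∫ x, (f (replaceCoords u g x) - h (replaceCoords u g x)) ^ 2 ∂μ)
              / Real.sqrt (∫ x, (f x - h x) ^ 2 ∂μ)) := by
  have hhG := apply_replaceCoords_of_measurable_coordSigma g hmeas
  have hh : MemLp h 2 μ := (hf.condExp one_le_two).ae_eq hver.symm
  have hrG : MemLp (fun x => f (replaceCoords u g x) - h (replaceCoords u g x)) 2 μ := by
    simp_rw [hhG]
    exact hfG.sub hh
  calc (∫ x, (f x - f (replaceCoords u g x)) ^ 2 ∂μ) / fVar μ f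
      = (∫ x, ((f x - h x) - (f (replaceCoords u g x) - h (replaceCoords u g x))) ^ 2 ∂μ)
          / fVar μ f := by simp only [hhG, sub_sub_sub_cancel_right]
    _ ≤ (√(∫ x, (f x - h x) ^ 2 ∂μ)
          + √(∫ x, (f (replaceCoords u g x) - h (replaceCoords u g x)) ^ 2 ∂μ)) ^ 2
          / fVar μ f := by
        gcongr
        exact integral_sq_sub_le (hf.sub hh) hrG
    _ = _ := by
        rw [add_sq_div_eq_of_ne_zero hrpos.ne',
          Real.sq_sqrt (integral_nonneg fun x => sq_nonneg _),
          Real.sq_sqrt (integral_nonneg fun x => sq_nonneg _)]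

/-- Proposition 3.2: with `r = f - h`, `h` a fixed measurable version (depending only on
`x_{∼u}`) of `E[f|σ(x_{∼u})]`, `T_u = ‖r‖₂²/‖f-f₀‖₂²` and `δ_u = ‖f - f∘G‖₂²/‖f-f₀‖₂²`,
we have `δ_u ≤ T_u + ‖r∘G‖₂²/‖f-f₀‖₂² + 2 T_u ‖r∘G‖₂/‖r‖₂`. -/
theorem delta_upper_bound
    {p : ℕ} (hp : 1 ≤ p) (Ω : Fin p → Type*) [∀ i, MeasurableSpace (Ω i)]
    (μ : Measure (∀ i, Ω i)) [IsProbabilityMeasure μ]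
    (f : (∀ i, Ω i) → ℝ) (hf : MemLp f 2 μ)
    (hvar : 0 < fVar μ f)
    (u : Finset (Fin p)) (hu : u.Nonempty)
    (g : (∀ i : {i : Fin p // i ∈ uᶜ}, Ω i) → ∀ i : {i : Fin p // i ∈ u}, Ω i)
    (hg : Measurable g)
    (hfG : MemLp (fun x => f (replaceCoords u g x)) 2 μ)
    -- `h` is a fixed measurable version of `E[f | σ(x_{∼u})]` depending only on `x_{∼u}`:
    (h : (∀ i, Ω i) → ℝ)
    (hmeas : Measurable[coordSigma Ω uᶜ] h)
    (hver : h =ᵐ[μ] μ[f | coordSigma Ω uᶜ])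
    (hrpos : 0 < Real.sqrt (∫ x, (f x - h x) ^ 2 ∂μ)) :
    (∫ x, (f x - f (replaceCoords u g x)) ^ 2 ∂μ) / fVar μ f ≤
      (∫ x, (f x - h x) ^ 2 ∂μ) / fVar μ f
      + (∫ x, (f (replaceCoords u g x) - h (replaceCoords u g x)) ^ 2 ∂μ) / fVar μ f
      + 2 * ((∫ x, (f x - h x) ^ 2 ∂μ) / fVar μ f)
          * (Real.sqrt (∫ x, (f (replaceCoords u g x) - h (replaceCoords u g x)) ^ 2 ∂μ)
              / Real.sqrt (∫ x, (f x - h x) ^ 2 ∂μ)) :=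
  delta_upper_bound_general Ω μ f hf hvar u g hfG h hmeas hver hrpos
end

section
/- (Proposition A.1.) For any u ⊆ {1,…,p}, the set M_u = { f ∈ L²(μ) : for every k ∉ u, f does not depend on x_k } is a closed linear subspace of L²(μ). Here f (an equivalence class in L²(μ)) does not depend on x_k means: it has a representative for which there exists N in the product σ-algebra with μ(N) = 0 such that f(x) = f(y) for all x, y ∈ Ω∖N with x_{∼k} = y_{∼k}. -/
/-!
Being independent of `x_k` is insensitive to modifying a function on a null set, so it is a
property of `L²` classes. It is preserved by sums and scalar multiples, and by a.e. limits: off the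
countable union of the exceptional sets and of the set where the limit fails, pointwise equality
passes to the limit. Since `L^q` convergence yields an a.e. convergent subsequence, each such
property cuts out a closed subspace, and `M_u` is the intersection of these over `k ∉ u`.
-/

open MeasureTheory ProbabilityTheory

/-- A function `f` "does not depend on `x_k`" : there is a null set `N` (in the product
σ-algebra) such that `f x = f y` whenever `x, y ∉ N` agree on all coordinates other than `k`. -/
def NotDependsOn {p : ℕ} {Ω : Fin p → Type*} [∀ i, MeasurableSpace (Ω i)]
    (μ : Measure (∀ i, Ω i)) (f : (∀ i, Ω i) → ℝ) (k : Fin p) : Prop :=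
  ∃ N : Set (∀ i, Ω i), MeasurableSet N ∧ μ N = 0 ∧
    ∀ x ∉ N, ∀ y ∉ N, (∀ j, j ≠ k → x j = y j) → f x = f y

/-- `M_u ⊆ L²(μ)`: the set of (classes of) functions having, for each `k ∉ u`, a
representative which does not depend on `x_k`. -/
def Msub {p : ℕ} {Ω : Fin p → Type*} [∀ i, MeasurableSpace (Ω i)]
    (μ : Measure (∀ i, Ω i)) (u : Finset (Fin p)) : Set (Lp ℝ 2 μ) :=
  {f | ∀ k ∉ u, ∃ f' : (∀ i, Ω i) → ℝ, (f : (∀ i, Ω i) → ℝ) =ᵐ[μ] f' ∧ NotDependsOn μ f' k}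

open Filter Topology
open scoped ENNReal

section NotDependsOn

variable {p : ℕ} {Ω : Fin p → Type*} [∀ i, MeasurableSpace (Ω i)] {μ : Measure (∀ i, Ω i)}
  {f g : (∀ i, Ω i) → ℝ} {k : Fin p}

theorem notDependsOn_iff_exists_null :
    NotDependsOn μ f k ↔ ∃ N : Set (∀ i, Ω i), μ N = 0 ∧
      ∀ x ∉ N, ∀ y ∉ N, (∀ j, j ≠ k → x j = y j) → f x = f y := by
  refine ⟨fun ⟨N, _, hN0, hN⟩ => ⟨N, hN0, hN⟩, fun ⟨N, hN0, hN⟩ => ?_⟩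
  refine ⟨toMeasurable μ N, measurableSet_toMeasurable μ N, by rwa [measure_toMeasurable], ?_⟩
  exact fun x hx y hy => hN x (fun h => hx (subset_toMeasurable μ N h))
    y (fun h => hy (subset_toMeasurable μ N h))

theorem notDependsOn_const (c : ℝ) : NotDependsOn μ (fun _ => c) k :=
  ⟨∅, .empty, measure_empty, fun _ _ _ _ _ => rfl⟩

theorem NotDependsOn.add (hf : NotDependsOn μ f k) (hg : NotDependsOn μ g k) :
    NotDependsOn μ (f + g) k := by
  obtain ⟨Nf, -, hNf, hf⟩ := hf
  obtain ⟨Ng, -, hNg, hg⟩ := hg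
  refine notDependsOn_iff_exists_null.2 ⟨Nf ∪ Ng, measure_union_null hNf hNg, ?_⟩
  intro x hx y hy hxy
  rw [Set.mem_union, not_or] at hx hy
  simp only [Pi.add_apply, hf x hx.1 y hy.1 hxy, hg x hx.2 y hy.2 hxy]

theorem NotDependsOn.const_smul (c : ℝ) (hf : NotDependsOn μ f k) :
    NotDependsOn μ (c • f) k := by
  obtain ⟨N, hNm, hN0, hf⟩ := hf
  exact ⟨N, hNm, hN0, fun x hx y hy hxy => by simp only [Pi.smul_apply, hf x hx y hy hxy]⟩

theorem NotDependsOn.congr_ae (hf : NotDependsOn μ f k) (hfg : f =ᵐ[μ] g) :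
    NotDependsOn μ g k := by
  obtain ⟨N, -, hN0, hf⟩ := hf
  refine notDependsOn_iff_exists_null.2 ⟨N ∪ {x | f x ≠ g x}, measure_union_null hN0 hfg, ?_⟩
  intro x hx y hy hxy
  simp only [Set.mem_union, Set.mem_ofPred_eq, not_or, not_not] at hx hy
  rw [← hx.2, ← hy.2, hf x hx.1 y hy.1 hxy]

theorem notDependsOn_congr_ae (hfg : f =ᵐ[μ] g) : NotDependsOn μ f k ↔ NotDependsOn μ g k :=
  ⟨fun hf => hf.congr_ae hfg, fun hg => hg.congr_ae hfg.symm⟩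

theorem NotDependsOn.of_tendsto_ae {F : ℕ → (∀ i, Ω i) → ℝ} (hF : ∀ n, NotDependsOn μ (F n) k)
    (hlim : ∀ᵐ x ∂μ, Tendsto (fun n => F n x) atTop (𝓝 (f x))) : NotDependsOn μ f k := by
  choose N _ hN0 hF using hF
  refine notDependsOn_iff_exists_null.2
    ⟨{x | ¬Tendsto (fun n => F n x) atTop (𝓝 (f x))} ∪ ⋃ n, N n,
      measure_union_null hlim (measure_iUnion_null hN0), ?_⟩
  intro x hx y hy hxy
  simp only [Set.mem_union, Set.mem_ofPred_eq, Set.mem_iUnion, not_or, not_not, not_exists]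
    at hx hy
  exact tendsto_nhds_unique (hx.1.congr fun n => hF n x (hx.2 n) y (hy.2 n) hxy) hy.1

end NotDependsOn

section Submodule

variable {p : ℕ} {Ω : Fin p → Type*} [∀ i, MeasurableSpace (Ω i)] (μ : Measure (∀ i, Ω i))

def notDependsOnSubmodule (q : ℝ≥0∞) (k : Fin p) : Submodule ℝ (Lp ℝ q μ) where
  carrier := {f | NotDependsOn μ f k}
  zero_mem' := (notDependsOn_const 0).congr_ae (Lp.coeFn_zero ℝ q μ).symm
  add_mem' {f g} hf hg := (hf.add hg).congr_ae (Lp.coeFn_add f g).symm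
  smul_mem' c f hf := (hf.const_smul c).congr_ae (Lp.coeFn_smul c f).symm

theorem mem_notDependsOnSubmodule {q : ℝ≥0∞} {k : Fin p} {f : Lp ℝ q μ} :
    f ∈ notDependsOnSubmodule μ q k ↔ NotDependsOn μ f k :=
  Iff.rfl

theorem isClosed_notDependsOnSubmodule {q : ℝ≥0∞} [Fact (1 ≤ q)] (k : Fin p) :
    IsClosed (notDependsOnSubmodule μ q k : Set (Lp ℝ q μ)) := by
  refine IsSeqClosed.isClosed fun F f hF hlim => ?_
  obtain ⟨ns, -, hae⟩ := (tendstoInMeasure_of_tendsto_Lp hlim).exists_seq_tendsto_ae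
  exact NotDependsOn.of_tendsto_ae (fun n => hF (ns n)) hae

theorem mem_Msub_iff {u : Finset (Fin p)} {f : Lp ℝ 2 μ} :
    f ∈ Msub μ u ↔ ∀ k ∉ u, NotDependsOn μ f k :=
  forall₂_congr fun _ _ =>
    ⟨fun ⟨_, hf, h⟩ => h.congr_ae hf.symm, fun h => ⟨_, .rfl, h⟩⟩

end Submodule

theorem Msub_isClosed_submodule_general
    {p : ℕ} (Ω : Fin p → Type*) [∀ i, MeasurableSpace (Ω i)]
    (μ : Measure (∀ i, Ω i))
    (u : Finset (Fin p)) :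
    ∃ S : Submodule ℝ (Lp ℝ 2 μ),
      (S : Set (Lp ℝ 2 μ)) = Msub μ u ∧ IsClosed (S : Set (Lp ℝ 2 μ)) := by
  refine ⟨⨅ (k) (_ : k ∉ u), notDependsOnSubmodule μ 2 k, ?_, ?_⟩
  · ext f
    simp only [Submodule.coe_iInf, Set.mem_iInter, SetLike.mem_coe, mem_notDependsOnSubmodule,
      mem_Msub_iff]
  · simp only [Submodule.coe_iInf]
    exact isClosed_iInter fun k => isClosed_iInter fun _ => isClosed_notDependsOnSubmodule μ k

/-- Proposition A.1: `M_u` is a closed linear subspace of `L²(μ)`. -/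
theorem Msub_isClosed_submodule
    {p : ℕ} (hp : 1 ≤ p) (Ω : Fin p → Type*) [∀ i, MeasurableSpace (Ω i)]
    (μ : Measure (∀ i, Ω i)) [IsProbabilityMeasure μ]
    (u : Finset (Fin p)) :
    ∃ S : Submodule ℝ (Lp ℝ 2 μ),
      (S : Set (Lp ℝ 2 μ)) = Msub μ u ∧ IsClosed (S : Set (Lp ℝ 2 μ)) :=
  Msub_isClosed_submodule_general Ω μ u
end

section
/- (Example 1.1.) Let ρ ∈ (0,1) and let μ be the law on ℝ² of (Z₁, ρZ₁ + √(1−ρ²) Z₂), where Z₁, Z₂ are independent standard normal random variables, so that the coordinates x₁, x₂ are jointly normal with mean 0, variance 1 and covariance ρ. Let f(x₁,x₂) = x₁ + x₂. Then the decomposition components are f₁ = (1+ρ)x₁, f₂ = (1+ρ)x₂ and f_{1,2} = −ρ(x₁+x₂) (each equality μ-almost everywhere), and the Sobol' indices are S_{{1}} = S_{{2}} = (1+ρ)/2 and S_{{1,2}} = −ρ; in particular S_{{1,2}} < 0. -/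
open MeasureTheory ProbabilityTheory

/-- The law on `ℝ²` of `(Z₁, ρ Z₁ + √(1-ρ²) Z₂)` with `Z₁, Z₂` independent standard
normals: a jointly normal pair with mean `0`, variance `1` and covariance `ρ`. -/
noncomputable def jointNormal (ρ : ℝ) : Measure (ℝ × ℝ) :=
  Measure.map (fun z : ℝ × ℝ => (z.1, ρ * z.1 + Real.sqrt (1 - ρ ^ 2) * z.2))
    ((gaussianReal 0 1).prod (gaussianReal 0 1))

/-!
Under a Gaussian law, a residual `Y - a X` that is uncorrelated with `X` is independent of `X`,
so `E[Y | X] = a X + E[Y - a X]`. For the correlated pair `(x₁, x₂)` with covariance matrix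
`[[1, ρ], [ρ, 1]]` this gives `E[x₁ + x₂ | x₁] = (1 + ρ) x₁` and `E[x₁ + x₂ | x₂] = (1 + ρ) x₂`,
hence `f_{1,2} = -ρ (x₁ + x₂)`. Every component is then linear, and the Sobol' indices are read off
the covariance matrix: `Cov(a x₁ + b x₂, x₁ + x₂) = (a + b)(1 + ρ)` and `Var(x₁ + x₂) = 2(1 + ρ)`.
-/

namespace ProbabilityTheory

variable {Ω : Type*} {mΩ : MeasurableSpace Ω} {P : Measure Ω}

lemma covariance_congr_left {X X' Y : Ω → ℝ} (h : X =ᵐ[P] X') :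
    cov[X, Y; P] = cov[X', Y; P] := by
  simp only [covariance, integral_congr_ae h]
  exact integral_congr_ae (h.mono fun ω hω ↦ by simp only [hω])

lemma covariance_const_mul_add_const_mul [IsFiniteMeasure P] {U V : Ω → ℝ}
    (hU : MemLp U 2 P) (hV : MemLp V 2 P) (p q p' q' : ℝ) :
    cov[fun ω ↦ p * U ω + q * V ω, fun ω ↦ p' * U ω + q' * V ω; P] =
      p * p' * Var[U; P] + (p * q' + q * p') * cov[U, V; P] + q * q' * Var[V; P] := by
  have hpU := hU.const_mul p
  have hqV := hV.const_mul q
  have hp'U := hU.const_mul p'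
  have hq'V := hV.const_mul q'
  change cov[(fun ω ↦ p * U ω) + (fun ω ↦ q * V ω),
    (fun ω ↦ p' * U ω) + (fun ω ↦ q' * V ω); P] = _
  rw [covariance_add_left hpU hqV (hp'U.add hq'V), covariance_add_right hpU hp'U hq'V,
    covariance_add_right hqV hp'U hq'V]
  simp only [covariance_const_mul_left, covariance_const_mul_right]
  rw [covariance_self hU.aemeasurable, covariance_self hV.aemeasurable, covariance_comm V U]
  ring

theorem HasGaussianLaw.condExp_comap_ae_eq {X Y : Ω → ℝ} (hX : Measurable X)
    (hY : Measurable Y) (hXY : HasGaussianLaw (fun ω ↦ (X ω, Y ω)) P) {a : ℝ}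
    (ha : cov[X, Y; P] = a * Var[X; P]) :
    P[Y | MeasurableSpace.comap X inferInstance] =ᵐ[P]
      fun ω ↦ a * X ω + P[fun ω ↦ Y ω - a * X ω] := by
  have := hXY.isProbabilityMeasure
  set R : Ω → ℝ := fun ω ↦ Y ω - a * X ω with hR
  have hXR : HasGaussianLaw (fun ω ↦ (X ω, R ω)) P :=
    hXY.map_fun ((ContinuousLinearMap.fst ℝ ℝ ℝ).prod
      (ContinuousLinearMap.snd ℝ ℝ ℝ - a • ContinuousLinearMap.fst ℝ ℝ ℝ))
  have hcov : cov[X, R; P] = 0 := by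
    rw [covariance_fun_sub_right hXY.fst.memLp_two hXY.snd.memLp_two
      (hXY.fst.memLp_two.const_mul a), covariance_const_mul_right,
      covariance_self hX.aemeasurable, ha, sub_self]
  have hind : IndepFun R X P := (hXR.indepFun_of_covariance_eq_zero hcov).symm
  have hYR : Y = (fun ω ↦ a * X ω) + R := by funext ω; simp [hR]
  have haX : Integrable (fun ω ↦ a * X ω) P := hXY.fst.integrable.const_mul a
  have hR_int : Integrable R P := hXY.snd.integrable.sub haX
  have haX_meas : StronglyMeasurable[MeasurableSpace.comap X inferInstance]
      (fun ω ↦ a * X ω) :=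
    ((measurable_const.mul measurable_id).comp (Measurable.of_comap_le le_rfl)).stronglyMeasurable
  rw [hYR]
  filter_upwards [condExp_add haX hR_int (MeasurableSpace.comap X inferInstance),
    condExp_indep_eq (by fun_prop : Measurable R).comap_le hX.comap_le
      (Measurable.of_comap_le le_rfl).stronglyMeasurable hind] with ω h_add h_indep
  rw [h_add, Pi.add_apply, condExp_of_stronglyMeasurable hX.comap_le haX_meas haX]
  exact congrArg _ h_indep

end ProbabilityTheory

local notation "γ₂" => Measure.prod (gaussianReal 0 1) (gaussianReal 0 1)

lemma memLp_fst_prod_gaussianReal : MemLp (fun z : ℝ × ℝ ↦ z.1) 2 γ₂ :=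
  (memLp_id_gaussianReal 2).comp_fst _

lemma memLp_snd_prod_gaussianReal : MemLp (fun z : ℝ × ℝ ↦ z.2) 2 γ₂ :=
  (memLp_id_gaussianReal 2).comp_snd _

lemma integral_linear_prod_gaussianReal (p q : ℝ) : ∫ z, p * z.1 + q * z.2 ∂γ₂ = 0 := by
  have h1 : ∫ z, z.1 ∂γ₂ = 0 := by
    simpa [integral_id_gaussianReal] using
      integral_fun_fst (μ := gaussianReal 0 1) (ν := gaussianReal 0 1) (fun x ↦ x)
  have h2 : ∫ z, z.2 ∂γ₂ = 0 := by
    simpa [integral_id_gaussianReal] using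
      integral_fun_snd (μ := gaussianReal 0 1) (ν := gaussianReal 0 1) (fun x ↦ x)
  rw [integral_add (memLp_fst_prod_gaussianReal.integrable one_le_two |>.const_mul p)
    (memLp_snd_prod_gaussianReal.integrable one_le_two |>.const_mul q),
    integral_const_mul, integral_const_mul, h1, h2]
  simp

lemma covariance_linear_prod_gaussianReal (p q p' q' : ℝ) :
    cov[fun z ↦ p * z.1 + q * z.2, fun z ↦ p' * z.1 + q' * z.2; γ₂] = p * p' + q * q' := by
  have h1 : Var[fun z : ℝ × ℝ ↦ z.1; γ₂] = 1 := by
    simpa using (measurePreserving_fst (μ := gaussianReal 0 1)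
      (ν := gaussianReal 0 1)).variance_fun_comp (f := id) measurable_id.aemeasurable
  have h2 : Var[fun z : ℝ × ℝ ↦ z.2; γ₂] = 1 := by
    simpa using (measurePreserving_snd (μ := gaussianReal 0 1)
      (ν := gaussianReal 0 1)).variance_fun_comp (f := id) measurable_id.aemeasurable
  have h12 : cov[fun z : ℝ × ℝ ↦ z.1, fun z ↦ z.2; γ₂] = 0 :=
    covariance_fst_snd_prod (memLp_id_gaussianReal 2) (memLp_id_gaussianReal 2)
  rw [covariance_const_mul_add_const_mul memLp_fst_prod_gaussianReal
    memLp_snd_prod_gaussianReal, h1, h2, h12]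
  ring

namespace jointNormal

variable {ρ : ℝ}

instance isGaussian (ρ : ℝ) : IsGaussian (jointNormal ρ) := by
  have : jointNormal ρ = Measure.map ((ContinuousLinearMap.fst ℝ ℝ ℝ).prod
      (ρ • ContinuousLinearMap.fst ℝ ℝ ℝ + √(1 - ρ ^ 2) • ContinuousLinearMap.snd ℝ ℝ ℝ)) γ₂ :=
    rfl
  rw [this]
  infer_instance

lemma integral_linear (ρ a b : ℝ) : ∫ x, a * x.1 + b * x.2 ∂jointNormal ρ = 0 := by
  rw [jointNormal, integral_map (by fun_prop) (by fun_prop)]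
  calc _ = ∫ z, (a + b * ρ) * z.1 + b * √(1 - ρ ^ 2) * z.2 ∂γ₂ := by
          congr 1; funext z; ring
    _ = 0 := integral_linear_prod_gaussianReal _ _

lemma covariance_linear (hρ : ρ ^ 2 ≤ 1) (a b a' b' : ℝ) :
    cov[fun x ↦ a * x.1 + b * x.2, fun x ↦ a' * x.1 + b' * x.2; jointNormal ρ] =
      a * a' + b * b' + ρ * (a * b' + a' * b) := by
  have hc : √(1 - ρ ^ 2) ^ 2 = 1 - ρ ^ 2 := Real.sq_sqrt (by linarith)
  rw [jointNormal, covariance_map_fun (by fun_prop) (by fun_prop) (by fun_prop)]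
  calc _ = cov[fun z ↦ (a + b * ρ) * z.1 + b * √(1 - ρ ^ 2) * z.2,
        fun z ↦ (a' + b' * ρ) * z.1 + b' * √(1 - ρ ^ 2) * z.2; γ₂] := by
          congr 1 <;> funext z <;> ring
    _ = _ := by
      rw [covariance_linear_prod_gaussianReal]
      linear_combination b * b' * hc

lemma condExp_comap_fst (hρ : ρ ^ 2 ≤ 1) (a b : ℝ) :
    (jointNormal ρ)[fun x ↦ a * x.1 + b * x.2 | MeasurableSpace.comap Prod.fst inferInstance]
      =ᵐ[jointNormal ρ] fun x ↦ (a + b * ρ) * x.1 := by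
  have hlaw : HasGaussianLaw (fun x : ℝ × ℝ ↦ (x.1, a * x.1 + b * x.2)) (jointNormal ρ) :=
    IsGaussian.hasGaussianLaw_id.map_fun ((ContinuousLinearMap.fst ℝ ℝ ℝ).prod
      (a • ContinuousLinearMap.fst ℝ ℝ ℝ + b • ContinuousLinearMap.snd ℝ ℝ ℝ))
  have hvar : Var[Prod.fst; jointNormal ρ] = 1 := by
    rw [← covariance_self measurable_fst.aemeasurable]
    simpa using covariance_linear hρ 1 0 1 0
  have hcov : cov[Prod.fst, fun x ↦ a * x.1 + b * x.2; jointNormal ρ] = a + b * ρ := by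
    have h := covariance_linear hρ 1 0 a b
    simp only [one_mul, zero_mul, add_zero] at h
    exact h.trans (by ring)
  have hres : ∫ x, a * x.1 + b * x.2 - (a + b * ρ) * x.1 ∂jointNormal ρ = 0 := by
    rw [← integral_linear ρ (-(b * ρ)) b]
    congr 1; funext x; ring
  filter_upwards [hlaw.condExp_comap_ae_eq measurable_fst (by fun_prop)
    (a := a + b * ρ) (by rw [hcov, hvar, mul_one])] with x hx
  rw [hx, hres, add_zero]

lemma condExp_comap_snd (hρ : ρ ^ 2 ≤ 1) (a b : ℝ) :
    (jointNormal ρ)[fun x ↦ a * x.1 + b * x.2 | MeasurableSpace.comap Prod.snd inferInstance]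
      =ᵐ[jointNormal ρ] fun x ↦ (a * ρ + b) * x.2 := by
  have hlaw : HasGaussianLaw (fun x : ℝ × ℝ ↦ (x.2, a * x.1 + b * x.2)) (jointNormal ρ) :=
    IsGaussian.hasGaussianLaw_id.map_fun ((ContinuousLinearMap.snd ℝ ℝ ℝ).prod
      (a • ContinuousLinearMap.fst ℝ ℝ ℝ + b • ContinuousLinearMap.snd ℝ ℝ ℝ))
  have hvar : Var[Prod.snd; jointNormal ρ] = 1 := by
    rw [← covariance_self measurable_snd.aemeasurable]
    simpa using covariance_linear hρ 0 1 0 1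
  have hcov : cov[Prod.snd, fun x ↦ a * x.1 + b * x.2; jointNormal ρ] = a * ρ + b := by
    have h := covariance_linear hρ 0 1 a b
    simp only [one_mul, zero_mul, mul_one, zero_add] at h
    exact h.trans (by ring)
  have hres : ∫ x, a * x.1 + b * x.2 - (a * ρ + b) * x.2 ∂jointNormal ρ = 0 := by
    rw [← integral_linear ρ a (-(a * ρ))]
    congr 1; funext x; ring
  filter_upwards [hlaw.condExp_comap_ae_eq measurable_snd (by fun_prop)
    (a := a * ρ + b) (by rw [hcov, hvar, mul_one])] with x hx
  rw [hx, hres, add_zero]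

lemma fCov_div_fVar_of_ae_eq_linear (hρ : ρ ∈ Set.Ioc (-1) 1) (a b : ℝ) {g : ℝ × ℝ → ℝ}
    (hg : g =ᵐ[jointNormal ρ] fun x ↦ a * x.1 + b * x.2) :
    fCov (jointNormal ρ) g (fun x ↦ 1 * x.1 + 1 * x.2) /
      fVar (jointNormal ρ) (fun x ↦ 1 * x.1 + 1 * x.2) = (a + b) / 2 := by
  have hρ2 : ρ ^ 2 ≤ 1 := by nlinarith [hρ.1, hρ.2]
  have hcov : fCov (jointNormal ρ) g (fun x ↦ 1 * x.1 + 1 * x.2) = (a + b) * (1 + ρ) := by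
    rw [fCov, ← covariance, covariance_congr_left hg, covariance_linear hρ2]
    ring
  have hvar : fVar (jointNormal ρ) (fun x ↦ 1 * x.1 + 1 * x.2) = 2 * (1 + ρ) := by
    rw [fVar, ← variance_eq_integral (by fun_prop), ← covariance_self (by fun_prop),
      covariance_linear hρ2]
    ring
  have hpos : 0 < 1 + ρ := by linarith [hρ.1]
  rw [hcov, hvar]
  field_simp

end jointNormal

/-- Example 1.1: for `f(x₁,x₂) = x₁ + x₂` with `(x₁,x₂)` jointly normal (mean 0,
variance 1, covariance `ρ ∈ (0,1)`), the decomposition components are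
`f₁ = (1+ρ)x₁`, `f₂ = (1+ρ)x₂`, `f_{1,2} = -ρ(x₁+x₂)` (μ-a.e.), and the Sobol' indices
are `S₁ = S₂ = (1+ρ)/2` and `S_{1,2} = -ρ < 0`. -/
theorem example_1_1 (ρ : ℝ) (hρ : ρ ∈ Set.Ioo (0 : ℝ) 1)
    (μ : Measure (ℝ × ℝ)) (hμ : μ = jointNormal ρ)
    (f : ℝ × ℝ → ℝ) (hf : f = fun x => x.1 + x.2)
    (f₀ : ℝ) (hf₀ : f₀ = ∫ x, f x ∂μ)
    (f1 f2 f12 : ℝ × ℝ → ℝ)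
    (hf1 : f1 = fun x =>
      (μ[f | MeasurableSpace.comap Prod.fst (inferInstance : MeasurableSpace ℝ)]) x - f₀)
    (hf2 : f2 = fun x =>
      (μ[f | MeasurableSpace.comap Prod.snd (inferInstance : MeasurableSpace ℝ)]) x - f₀)
    (hf12 : f12 = fun x => f x - f1 x - f2 x - f₀) :
    (∀ᵐ x ∂μ, f1 x = (1 + ρ) * x.1) ∧
    (∀ᵐ x ∂μ, f2 x = (1 + ρ) * x.2) ∧
    (∀ᵐ x ∂μ, f12 x = -ρ * (x.1 + x.2)) ∧
    fCov μ f1 f / fVar μ f = (1 + ρ) / 2 ∧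
    fCov μ f2 f / fVar μ f = (1 + ρ) / 2 ∧
    fCov μ f12 f / fVar μ f = -ρ ∧
    fCov μ f12 f / fVar μ f < 0 := by
  obtain ⟨hρ0, hρ1⟩ := hρ
  have hρ' : ρ ∈ Set.Ioc (-1) 1 := ⟨by linarith, hρ1.le⟩
  have hρ2 : ρ ^ 2 ≤ 1 := by nlinarith
  subst hμ
  obtain rfl : f = fun x ↦ 1 * x.1 + 1 * x.2 := by simp [hf]
  have hf₀0 : f₀ = 0 := hf₀.trans (jointNormal.integral_linear ρ 1 1)
  have h1 : ∀ᵐ x ∂jointNormal ρ, f1 x = (1 + ρ) * x.1 := by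
    filter_upwards [jointNormal.condExp_comap_fst hρ2 1 1] with x hx
    simp only [hf1, hx, hf₀0]
    ring
  have h2 : ∀ᵐ x ∂jointNormal ρ, f2 x = (1 + ρ) * x.2 := by
    filter_upwards [jointNormal.condExp_comap_snd hρ2 1 1] with x hx
    simp only [hf2, hx, hf₀0]
    ring
  have h12 : ∀ᵐ x ∂jointNormal ρ, f12 x = -ρ * (x.1 + x.2) := by
    filter_upwards [h1, h2] with x hx1 hx2
    simp only [hf12, hx1, hx2, hf₀0]
    ring
  have hS12 := jointNormal.fCov_div_fVar_of_ae_eq_linear hρ' (-ρ) (-ρ) (g := f12)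
    (h12.mono fun x hx ↦ by rw [hx]; ring)
  refine ⟨h1, h2, h12, ?_, ?_, hS12.trans (by ring), by rw [hS12]; linarith⟩
  · rw [jointNormal.fCov_div_fVar_of_ae_eq_linear hρ' (1 + ρ) 0 (g := f1)
      (h1.mono fun x hx ↦ by rw [hx]; ring)]
    ring
  · rw [jointNormal.fCov_div_fVar_of_ae_eq_linear hρ' 0 (1 + ρ) (g := f2)
      (h2.mono fun x hx ↦ by rw [hx]; ring)]
    ring
end
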